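/- Let P1 and P2 be propositional normal logic programs such that no head atom of P2 occurs in P1. Then M is an answer set of P1 ∪ sat(P2) if and only if M = M1 ∪ M2 where M1 is an answer set of P1 and M2 ⊆ heads(sat(P2)) is either {sat} or such that M1 ∪ M2 is an answer set of P2 ∪ fix_{P1}(M1). -/

import Mathlib

open Classical

/-- A propositional normal rule: optional head (none = constraint),
positive body atoms and (default-)negated body atoms. -/
structure ARule (α : Type) where
  head : Option α
  pos : Set α
  neg : Set α

/-- A propositional normal logic program. -/
abbrev AProgram (α : Type) := Set (ARule α)

namespace ASP

variable {α : Type}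

def ARule.headSet (r : ARule α) : Set α := {a | r.head = some a}

def ARule.atoms (r : ARule α) : Set α := ARule.headSet r ∪ r.pos ∪ r.neg

def progAtoms (P : AProgram α) : Set α := ⋃ r ∈ P, ARule.atoms r

def heads (P : AProgram α) : Set α := {a | ∃ r ∈ P, r.head = some a}

/-- The body of a rule is true in interpretation `I`. -/
def bodyTrue (I : Set α) (r : ARule α) : Prop :=
  r.pos ⊆ I ∧ ∀ a ∈ r.neg, a ∉ I

/-- `I` satisfies rule `r`. -/
def satRule (I : Set α) (r : ARule α) : Prop :=
  bodyTrue I r → ∃ h, r.head = some h ∧ h ∈ I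

def isModel (I : Set α) (P : AProgram α) : Prop := ∀ r ∈ P, satRule I r

/-- Gelfond–Lifschitz reduct of `P` with respect to `I`. -/
def reduct (P : AProgram α) (I : Set α) : AProgram α :=
  {r' | ∃ r ∈ P, (∀ a ∈ r.neg, a ∉ I) ∧ r' = ⟨r.head, r.pos, ∅⟩}

/-- `I` is an answer set of `P`: a minimal model of the reduct `P^I`. -/
def isAnswerSet (P : AProgram α) (I : Set α) : Prop :=
  isModel I (reduct P I) ∧ ∀ J, J ⊂ I → ¬ isModel J (reduct P I)

/-- A program is coherent if it has an answer set. -/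
def coherent (P : AProgram α) : Prop := ∃ I, isAnswerSet P I

/-- `fix B M`: facts for atoms of `M` and constraints for atoms of `B \ M`. -/
def fixProg (B M : Set α) : AProgram α :=
  {r | (∃ a ∈ M, r = ⟨some a, ∅, ∅⟩) ∨ (∃ a ∈ B \ M, r = ⟨none, {a}, ∅⟩)}

/-- A ground weak constraint `:~ pos, not neg [weight@level]`. -/
structure WeakC (α : Type) where
  pos : Set α
  neg : Set α
  weight : ℤ
  level : ℤ

def WeakC.atoms (w : WeakC α) : Set α := w.pos ∪ w.neg

/-- The body of a weak constraint is true in `I` (the weak constraint is violated). -/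
def WeakC.violated (w : WeakC α) (I : Set α) : Prop :=
  w.pos ⊆ I ∧ ∀ a ∈ w.neg, a ∉ I

/-- Cost of interpretation `I` at level `l` for weak constraints `W`. -/
noncomputable def cost (W : Finset (WeakC α)) (I : Set α) (l : ℤ) : ℤ :=
  ∑ w ∈ W.filter (fun w => w.level = l ∧ WeakC.violated w I), w.weight

/-- `I` is dominated by `J` with respect to the weak constraints `W`. -/
def dominated (W : Finset (WeakC α)) (I J : Set α) : Prop :=
  ∃ l, cost W I l > cost W J l ∧ ∀ l' > l, cost W I l' = cost W J l'

/-- `M` is an optimal answer set of program `P` with weak constraints `W`. -/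
def optAS (P : AProgram α) (W : Finset (WeakC α)) (M : Set α) : Prop :=
  isAnswerSet P M ∧ ∀ M', isAnswerSet P M' → ¬ dominated W M M'

/-- `sat(P)`: add `not s` to each rule body, plus a choice on the fresh atom `s`
 (rules `s :- not n` and `n :- not s`). -/
def satProg (s n : α) (P : AProgram α) : AProgram α :=
  ((fun r : ARule α => ARule.mk r.head r.pos (insert s r.neg)) '' P) ∪
    {⟨some s, ∅, {n}⟩, ⟨some n, ∅, {s}⟩}

/-- Complement `¬P` of a program with constraints: each constraint `:- B` becomes
 `v :- B`, and the constraint `:- not v` is added. -/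
def complProg (v : α) (P : AProgram α) : AProgram α :=
  {r | r ∈ P ∧ r.head ≠ none} ∪
    {r' | ∃ r ∈ P, r.head = none ∧ r' = ⟨some v, r.pos, r.neg⟩} ∪
    {⟨none, ∅, {v}⟩}

/-- Rules of `relaxed(P,l)`: keep rules with heads, turn each constraint `:- B`
into `unsat :- B`. -/
def relaxedRules (u : α) (P : AProgram α) : AProgram α :=
  {r | r ∈ P ∧ r.head ≠ none} ∪
    {r' | ∃ r ∈ P, r.head = none ∧ r' = ⟨some u, r.pos, r.neg⟩}

/-- The weak constraint `:~ unsat [1@l]` of `relaxed(P,l)`. -/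
def relaxWeak (u : α) (l : ℤ) : WeakC α := ⟨{u}, ∅, 1, l⟩

/-- A stratification: positive dependencies do not increase the level,
negative dependencies strictly decrease it. -/
def IsStratification (P : AProgram α) (lv : α → ℕ) : Prop :=
  ∀ r ∈ P, ∀ h, r.head = some h →
    (∀ a ∈ r.pos, lv a ≤ lv h) ∧ (∀ a ∈ r.neg, lv a < lv h)

def Stratified (P : AProgram α) : Prop := ∃ lv, IsStratification P lv

/-- `M` (an answer set of a program with atom base `B`) satisfies the constraint
program `C` iff `C ∪ fix_B(M)` is coherent. -/
def satisfiesC (C : AProgram α) (B M : Set α) : Prop := coherent (C ∪ fixProg B M)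

end ASP

/-! Since no head of `sat(P2)` occurs in `P1`, the atoms of `P1` split `P1 ∪ sat(P2)`
(Lifschitz–Turner): its answer sets are the answer sets `N` of `sat(P2) ∪ fix_{P1}(M1)` with
`M1 = N ∩ atoms(P1)` an answer set of `P1`. In `sat(P2) ∪ fix_{P1}(M1)` the choice either makes
`sat` true, which switches off every rule of `P2` and leaves `fix_{P1}(M1)`, whose only answer
set is `M1`; or makes `nsat` true, a fresh fact that can be dropped, leaving `P2 ∪ fix_{P1}(M1)`. -/

namespace ASP

variable {α : Type}

section Atoms

variable {P : AProgram α} {r : ARule α} {a : α}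

lemma mem_progAtoms_of_head (hr : r ∈ P) (h : r.head = some a) : a ∈ progAtoms P :=
  Set.mem_biUnion hr (Or.inl (Or.inl h))

lemma mem_progAtoms_of_pos (hr : r ∈ P) (h : a ∈ r.pos) : a ∈ progAtoms P :=
  Set.mem_biUnion hr (Or.inl (Or.inr h))

lemma mem_progAtoms_of_neg (hr : r ∈ P) (h : a ∈ r.neg) : a ∈ progAtoms P :=
  Set.mem_biUnion hr (Or.inr h)

lemma heads_subset_progAtoms (P : AProgram α) : heads P ⊆ progAtoms P := by
  rintro a ⟨r, hr, h⟩
  exact mem_progAtoms_of_head hr h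

lemma progAtoms_union (P Q : AProgram α) : progAtoms (P ∪ Q) = progAtoms P ∪ progAtoms Q :=
  Set.biUnion_union P Q ARule.atoms

lemma heads_union (P Q : AProgram α) : heads (P ∪ Q) = heads P ∪ heads Q := by
  ext a
  simp only [heads, Set.mem_union, Set.mem_ofPred_eq, or_and_right, exists_or]

end Atoms

section Models

variable {P R : AProgram α} {I J : Set α}

lemma satRule_congr {r : ARule α} (h : ∀ a ∈ ARule.atoms r, a ∈ I ↔ a ∈ J) :
    satRule I r ↔ satRule J r := by
  have hpos : r.pos ⊆ I ↔ r.pos ⊆ J :=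
    forall₂_congr fun a ha => h a (Or.inl (Or.inr ha))
  have hneg : (∀ a ∈ r.neg, a ∉ I) ↔ ∀ a ∈ r.neg, a ∉ J :=
    forall₂_congr fun a ha => not_congr (h a (Or.inr ha))
  have hhead : (∃ b, r.head = some b ∧ b ∈ I) ↔ ∃ b, r.head = some b ∧ b ∈ J :=
    exists_congr fun b => and_congr_right fun hb => h b (Or.inl (Or.inl hb))
  simp only [satRule, bodyTrue, hpos, hneg, hhead]

lemma isModel_congr (h : ∀ a ∈ progAtoms R, a ∈ I ↔ a ∈ J) : isModel I R ↔ isModel J R :=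
  forall₂_congr fun _ hr => satRule_congr fun _ ha => h _ (Set.mem_biUnion hr ha)

lemma isModel_inter_iff {B : Set α} (hR : progAtoms R ⊆ B) : isModel (I ∩ B) R ↔ isModel I R :=
  isModel_congr fun _ ha => and_iff_left (hR ha)

lemma isModel_diff_singleton_iff {a : α} (ha : a ∉ progAtoms R) :
    isModel (I \ {a}) R ↔ isModel I R :=
  isModel_congr fun _ hb => and_iff_left (ne_of_mem_of_not_mem hb ha)

lemma isModel_union {R' : AProgram α} : isModel I (R ∪ R') ↔ isModel I R ∧ isModel I R' := by
  simp only [isModel, Set.mem_union, or_imp, forall_and]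

lemma isModel_fact {a : α} : isModel I {⟨some a, ∅, ∅⟩} ↔ a ∈ I := by
  simp [isModel, satRule, bodyTrue]

lemma isModel_reduct_iff {M : Set α} : isModel I (reduct P M) ↔
    ∀ r ∈ P, (∀ a ∈ r.neg, a ∉ M) → r.pos ⊆ I → ∃ b, r.head = some b ∧ b ∈ I := by
  constructor
  · intro h r hr hneg hpos
    exact h ⟨r.head, r.pos, ∅⟩ ⟨r, hr, hneg, rfl⟩ ⟨hpos, fun _ ha => ha.elim⟩
  · rintro h _ ⟨r, hr, hneg, rfl⟩ hbody
    exact h r hr hneg hbody.1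

lemma isModel_reduct_of_subset_of_diff_subset {M B K : Set α} (hI : isModel I (reduct P M))
    (hP : ∀ a ∈ heads P, a ∉ B) (hKI : K ⊆ I) (hK : I \ B ⊆ K) : isModel K (reduct P M) := by
  rw [isModel_reduct_iff] at hI ⊢
  intro r hr hneg hpos
  obtain ⟨b, hb, hbI⟩ := hI r hr hneg (hpos.trans hKI)
  exact ⟨b, hb, hK ⟨hbI, hP b ⟨r, hr, hb⟩⟩⟩

end Models

section Reduct

variable {P : AProgram α} {I J : Set α}

lemma reduct_union (P Q : AProgram α) (I : Set α) :
    reduct (P ∪ Q) I = reduct P I ∪ reduct Q I := by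
  ext r'
  constructor
  · rintro ⟨r, hr | hr, hneg, rfl⟩
    exacts [Or.inl ⟨r, hr, hneg, rfl⟩, Or.inr ⟨r, hr, hneg, rfl⟩]
  · rintro (⟨r, hr, hneg, rfl⟩ | ⟨r, hr, hneg, rfl⟩)
    exacts [⟨r, Or.inl hr, hneg, rfl⟩, ⟨r, Or.inr hr, hneg, rfl⟩]

lemma reduct_congr (h : ∀ a ∈ progAtoms P, a ∈ I ↔ a ∈ J) : reduct P I = reduct P J := by
  ext r'
  constructor <;> rintro ⟨r, hr, hneg, rfl⟩
  · exact ⟨r, hr, fun a ha haJ => hneg a ha ((h a (mem_progAtoms_of_neg hr ha)).2 haJ), rfl⟩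
  · exact ⟨r, hr, fun a ha haI => hneg a ha ((h a (mem_progAtoms_of_neg hr ha)).1 haI), rfl⟩

lemma reduct_inter_progAtoms : reduct P (I ∩ progAtoms P) = reduct P I :=
  reduct_congr fun _ ha => and_iff_left ha

lemma reduct_diff_singleton {a : α} (ha : a ∉ progAtoms P) : reduct P (I \ {a}) = reduct P I :=
  reduct_congr fun _ hb => and_iff_left (ne_of_mem_of_not_mem hb ha)

lemma reduct_eq_self (hP : ∀ r ∈ P, r.neg = ∅) : reduct P I = P := by
  ext r'
  constructor
  · rintro ⟨r, hr, -, rfl⟩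
    rwa [← hP r hr]
  · intro hr
    exact ⟨r', hr, by simp [hP r' hr], by rw [← hP r' hr]⟩

lemma progAtoms_reduct_subset : progAtoms (reduct P I) ⊆ progAtoms P := by
  simp only [progAtoms, Set.iUnion_subset_iff]
  rintro _ ⟨r, hr, -, rfl⟩ a ((ha | ha) | ha)
  exacts [mem_progAtoms_of_head hr ha, mem_progAtoms_of_pos hr ha, ha.elim]

end Reduct

lemma isAnswerSet.subset_heads {P : AProgram α} {I : Set α} (hI : isAnswerSet P I) :
    I ⊆ heads P := by
  intro a haI
  by_contra ha
  refine hI.2 (I \ {a}) (Set.sdiff_singleton_ssubset.2 haI)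
    (isModel_reduct_iff.2 fun r hr hneg hpos => ?_)
  obtain ⟨b, hb, hbI⟩ := isModel_reduct_iff.1 hI.1 r hr hneg (hpos.trans Set.sdiff_subset)
  exact ⟨b, hb, hbI, fun hba => ha (hba ▸ ⟨r, hr, hb⟩)⟩

section Fix

variable {B X N : Set α}

lemma reduct_fixProg : reduct (fixProg B X) N = fixProg B X :=
  reduct_eq_self <| by rintro r (⟨a, -, rfl⟩ | ⟨a, -, rfl⟩) <;> rfl

lemma heads_fixProg_subset : heads (fixProg B X) ⊆ X := by
  rintro a ⟨r, ⟨b, hb, rfl⟩ | ⟨b, -, rfl⟩, h⟩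
  · rwa [Option.some_inj.1 h] at hb
  · cases h

lemma progAtoms_fixProg_subset (hX : X ⊆ B) : progAtoms (fixProg B X) ⊆ B := by
  simp only [progAtoms, Set.iUnion_subset_iff]
  rintro r (⟨a, ha, rfl⟩ | ⟨a, ha, rfl⟩) b ((hb | hb) | hb)
  · exact hX (Option.some_inj.1 hb ▸ ha)
  · exact hb.elim
  · exact hb.elim
  · cases hb
  · exact (Set.mem_singleton_iff.1 hb) ▸ ha.1
  · exact hb.elim

lemma isModel_fixProg_iff (hX : X ⊆ B) : isModel N (fixProg B X) ↔ N ∩ B = X := by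
  constructor
  · intro h
    refine subset_antisymm ?_ fun a ha => ⟨?_, hX ha⟩
    · rintro a ⟨haN, haB⟩
      by_contra haX
      obtain ⟨_, hh, -⟩ := h _ (Or.inr ⟨a, ⟨haB, haX⟩, rfl⟩) ⟨by simpa using haN, by simp⟩
      cases hh
    · obtain ⟨b, hh, hb⟩ := h _ (Or.inl ⟨a, ha, rfl⟩) ⟨by simp, by simp⟩
      rwa [Option.some_inj.1 hh]
  · rintro hN r (⟨a, ha, rfl⟩ | ⟨a, ⟨haB, haX⟩, rfl⟩) hbody
    · exact ⟨a, rfl, (hN.symm ▸ ha : a ∈ N ∩ B).1⟩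
    · exact (haX (hN ▸ ⟨hbody.1 rfl, haB⟩)).elim

lemma isAnswerSet_fixProg_iff (hX : X ⊆ B) : isAnswerSet (fixProg B X) N ↔ N = X := by
  constructor
  · intro h
    refine subset_antisymm (h.subset_heads.trans heads_fixProg_subset) ?_
    have hmod := h.1
    rw [reduct_fixProg, isModel_fixProg_iff hX] at hmod
    exact hmod ▸ Set.inter_subset_left
  · rintro rfl
    unfold isAnswerSet
    rw [reduct_fixProg]
    refine ⟨(isModel_fixProg_iff hX).2 (Set.inter_eq_left.2 hX), fun J hJ hJX => ?_⟩
    exact hJ.2 ((isModel_fixProg_iff hX).1 hJX ▸ Set.inter_subset_left)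

lemma inter_eq_of_isAnswerSet_union_fixProg {P : AProgram α} (hX : X ⊆ B)
    (h : isAnswerSet (P ∪ fixProg B X) N) : N ∩ B = X := by
  have hmod := h.1
  rw [reduct_union, reduct_fixProg, isModel_union] at hmod
  exact (isModel_fixProg_iff hX).1 hmod.2

end Fix

lemma isAnswerSet_union_fact_iff {P : AProgram α} {N : Set α} {a : α} (ha : a ∉ progAtoms P) :
    isAnswerSet (P ∪ {⟨some a, ∅, ∅⟩}) N ↔ a ∈ N ∧ isAnswerSet P (N \ {a}) := by
  have hred : reduct (P ∪ {⟨some a, ∅, ∅⟩}) N = reduct P (N \ {a}) ∪ {⟨some a, ∅, ∅⟩} := by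
    rw [reduct_union, reduct_eq_self (P := {⟨some a, ∅, ∅⟩}) (by simp), reduct_diff_singleton ha]
  have hR : a ∉ progAtoms (reduct P (N \ {a})) := fun h => ha (progAtoms_reduct_subset h)
  unfold isAnswerSet
  simp only [hred, isModel_union, isModel_fact, isModel_diff_singleton_iff hR]
  constructor
  · rintro ⟨⟨hmod, haN⟩, hmin⟩
    refine ⟨haN, hmod, fun J hJ hJmod => hmin (insert a J) (by grind) ⟨?_, Set.mem_insert a J⟩⟩
    rwa [← isModel_diff_singleton_iff hR, Set.insert_sdiff_self_of_notMem fun h => (hJ.1 h).2 rfl]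
  · rintro ⟨haN, hmod, hmin⟩
    refine ⟨⟨hmod, haN⟩, fun J hJ ⟨hJmod, haJ⟩ => hmin (J \ {a}) ?_ ?_⟩
    · exact sdiff_lt_sdiff_right hJ (Set.singleton_subset_iff.2 haJ)
    · exact (isModel_diff_singleton_iff hR).2 hJmod

theorem isAnswerSet_union_splitting_iff {P Q : AProgram α} {N : Set α}
    (hQ : ∀ a ∈ heads Q, a ∉ progAtoms P) :
    isAnswerSet (P ∪ Q) N ↔ isAnswerSet P (N ∩ progAtoms P) ∧
      isAnswerSet (Q ∪ fixProg (progAtoms P) (N ∩ progAtoms P)) N := by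
  set B := progAtoms P
  set X := N ∩ B
  have hPX {J : Set α} : isModel J (reduct P X) ↔ isModel (J ∩ B) (reduct P X) :=
    (isModel_inter_iff progAtoms_reduct_subset).symm
  have hfix {J : Set α} : isModel J (fixProg B X) ↔ J ∩ B = X :=
    isModel_fixProg_iff Set.inter_subset_right
  unfold isAnswerSet
  rw [reduct_union, reduct_inter_progAtoms.symm, reduct_union, reduct_fixProg]
  simp only [isModel_union]
  constructor
  · rintro ⟨⟨hmodP, hmodQ⟩, hmin⟩
    refine ⟨⟨hPX.1 hmodP, fun J hJ hJP => ?_⟩, ⟨hmodQ, hfix.2 rfl⟩, fun J hJ ⟨hJQ, hJfix⟩ => ?_⟩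
    · have hJB : J ⊆ B := hJ.1.trans Set.inter_subset_right
      refine hmin (J ∪ N \ B) (by grind) ⟨hPX.2 ?_, ?_⟩
      · rwa [Set.union_inter_distrib_right, Set.inter_eq_left.2 hJB, Set.sdiff_inter_self,
          Set.union_empty]
      · exact isModel_reduct_of_subset_of_diff_subset hmodQ hQ
          (Set.union_subset (hJ.1.trans Set.inter_subset_left) Set.sdiff_subset)
          Set.subset_union_right
    · exact hmin J hJ ⟨hPX.2 (by rw [hfix.1 hJfix]; exact hPX.1 hmodP), hJQ⟩
  · rintro ⟨⟨hmodX, hminX⟩, ⟨hmodQ, -⟩, hminN⟩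
    refine ⟨⟨hPX.2 hmodX, hmodQ⟩, fun J hJ ⟨hJP, hJQ⟩ => hminN J hJ ⟨hJQ, hfix.2 ?_⟩⟩
    by_contra hne
    exact hminX (J ∩ B) (ssubset_of_subset_of_ne (Set.inter_subset_inter_left B hJ.1) hne)
      (hPX.1 hJP)

lemma isAnswerSet_congr_reduct {P Q : AProgram α} {N : Set α} (h : reduct P N = reduct Q N) :
    isAnswerSet P N ↔ isAnswerSet Q N := by
  unfold isAnswerSet
  rw [h]

section Sat

variable {s n : α} {P F : AProgram α} {N : Set α}

lemma heads_satProg : heads (satProg s n P) = insert s (insert n (heads P)) := by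
  ext a
  simp [heads, satProg, eq_comm]

lemma reduct_satProg_of_mem_of_notMem (hs : s ∈ N) (hn : n ∉ N) :
    reduct (satProg s n P) N = {⟨some s, ∅, ∅⟩} := by
  ext r'
  simp [reduct, satProg, hs, hn]

lemma reduct_satProg_of_notMem_of_mem (hs : s ∉ N) (hn : n ∈ N) :
    reduct (satProg s n P) N = reduct P N ∪ {⟨some n, ∅, ∅⟩} := by
  ext r'
  simp [reduct, satProg, hs, hn]

lemma reduct_satProg_of_mem_of_mem (hs : s ∈ N) (hn : n ∈ N) :
    reduct (satProg s n P) N = ∅ := by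
  ext r'
  simp [reduct, satProg, hs, hn]

lemma fact_mem_reduct_satProg (hs : s ∉ N) (hn : n ∉ N) :
    ⟨some s, ∅, ∅⟩ ∈ reduct (satProg s n P) N := by
  simp [reduct, satProg, hs, hn]

lemma isAnswerSet_satProg_union_iff_of_mem (hsF : s ∉ progAtoms F) (hs : s ∈ N) (hn : n ∉ N) :
    isAnswerSet (satProg s n P ∪ F) N ↔ isAnswerSet F (N \ {s}) := by
  have hred : reduct (satProg s n P ∪ F) N = reduct (F ∪ {⟨some s, ∅, ∅⟩}) N := by
    rw [reduct_union, reduct_union, reduct_satProg_of_mem_of_notMem hs hn,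
      reduct_eq_self (P := {⟨some s, ∅, ∅⟩}) (by simp), Set.union_comm]
  rw [isAnswerSet_congr_reduct hred, isAnswerSet_union_fact_iff hsF, and_iff_right hs]

lemma isAnswerSet_satProg_union_iff_of_notMem (hnP : n ∉ progAtoms P) (hnF : n ∉ progAtoms F)
    (hs : s ∉ N) (hn : n ∈ N) :
    isAnswerSet (satProg s n P ∪ F) N ↔ isAnswerSet (P ∪ F) (N \ {n}) := by
  have hred : reduct (satProg s n P ∪ F) N = reduct (P ∪ F ∪ {⟨some n, ∅, ∅⟩}) N := by
    rw [reduct_union, reduct_union, reduct_union, reduct_satProg_of_notMem_of_mem hs hn,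
      reduct_eq_self (P := {⟨some n, ∅, ∅⟩}) (by simp), Set.union_right_comm]
  have hnPF : n ∉ progAtoms (P ∪ F) := by
    rw [progAtoms_union]
    exact fun h => h.elim hnP hnF
  rw [isAnswerSet_congr_reduct hred, isAnswerSet_union_fact_iff hnPF, and_iff_right hn]

lemma mem_iff_notMem_of_isAnswerSet_satProg_union (hsF : s ∉ progAtoms F)
    (h : isAnswerSet (satProg s n P ∪ F) N) : s ∈ N ↔ n ∉ N := by
  constructor
  · intro hs hn
    have hF : isAnswerSet F N := by
      rwa [isAnswerSet_congr_reduct (Q := F)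
        (by rw [reduct_union, reduct_satProg_of_mem_of_mem hs hn, Set.empty_union])] at h
    exact hsF (heads_subset_progAtoms F (hF.subset_heads hs))
  · intro hn
    by_contra hs
    have hmod := h.1
    rw [reduct_union, isModel_union] at hmod
    refine hs (isModel_fact.1 fun r hr => hmod.1 r ?_)
    exact (Set.mem_singleton_iff.1 hr).symm ▸ fact_mem_reduct_satProg hs hn

end Sat

section UnionSat

variable {P1 P2 : AProgram α} {s n : α}

lemma notMem_progAtoms_of_heads_satProg (hheads : ∀ a ∈ heads P2, a ∉ progAtoms P1)
    (hs : s ∉ progAtoms P1 ∪ progAtoms P2) (hn : n ∉ progAtoms P1 ∪ progAtoms P2) :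
    ∀ a ∈ heads (satProg s n P2), a ∉ progAtoms P1 := by
  rw [heads_satProg]
  rintro a (rfl | rfl | ha)
  exacts [fun h => hs (Or.inl h), fun h => hn (Or.inl h), hheads a ha]

lemma exists_decomposition_of_isAnswerSet_union_satProg {N : Set α}
    (hheads : ∀ a ∈ heads P2, a ∉ progAtoms P1)
    (hs : s ∉ progAtoms P1 ∪ progAtoms P2) (hn : n ∉ progAtoms P1 ∪ progAtoms P2)
    (hN : isAnswerSet (P1 ∪ satProg s n P2) N) :
    ∃ M1 M2, N \ {n} = M1 ∪ M2 ∧ isAnswerSet P1 M1 ∧ M2 ⊆ heads (satProg s n P2) ∧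
      (M2 = {s} ∨ isAnswerSet (P2 ∪ fixProg (progAtoms P1) M1) (M1 ∪ M2)) := by
  set B := progAtoms P1
  obtain ⟨hX, hQ⟩ :=
    (isAnswerSet_union_splitting_iff (notMem_progAtoms_of_heads_satProg hheads hs hn)).1 hN
  set X := N ∩ B
  have hXB : X ⊆ B := Set.inter_subset_right
  have hsF : s ∉ progAtoms (fixProg B X) := fun h => hs (Or.inl (progAtoms_fixProg_subset hXB h))
  have hnF : n ∉ progAtoms (fixProg B X) := fun h => hn (Or.inl (progAtoms_fixProg_subset hXB h))
  have hchoice := mem_iff_notMem_of_isAnswerSet_satProg_union hsF hQ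
  by_cases hsN : s ∈ N
  · have hnN : n ∉ N := hchoice.1 hsN
    have hNX : N \ {s} = X := (isAnswerSet_fixProg_iff hXB).1
      ((isAnswerSet_satProg_union_iff_of_mem hsF hsN hnN).1 hQ)
    refine ⟨X, {s}, ?_, hX, by simp [heads_satProg], Or.inl rfl⟩
    rw [Set.sdiff_singleton_eq_self hnN, ← hNX, Set.sdiff_union_self,
      Set.union_eq_left.2 (Set.singleton_subset_iff.2 hsN)]
  · have hnN : n ∈ N := not_not.1 (mt hchoice.2 hsN)
    have hM := (isAnswerSet_satProg_union_iff_of_notMem (fun h => hn (Or.inr h)) hnF hsN hnN).1 hQ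
    have hMX : (N \ {n}) ∩ B = X := inter_eq_of_isAnswerSet_union_fixProg hXB hM
    have hsplit : N \ {n} = X ∪ (N \ {n}) \ B := by rw [← hMX, Set.inter_union_sdiff]
    refine ⟨X, (N \ {n}) \ B, hsplit, hX, ?_, Or.inr (by rwa [← hsplit])⟩
    · rintro a ⟨haM, haB⟩
      have ha := hM.subset_heads haM
      rw [heads_union] at ha
      rw [heads_satProg]
      exact Or.inr (Or.inr (ha.resolve_right fun h => haB (hXB (heads_fixProg_subset h))))

lemma isAnswerSet_union_satProg_of_decomposition {M1 M2 : Set α}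
    (hheads : ∀ a ∈ heads P2, a ∉ progAtoms P1)
    (hs : s ∉ progAtoms P1 ∪ progAtoms P2) (hn : n ∉ progAtoms P1 ∪ progAtoms P2) (hsn : s ≠ n)
    (hM1 : isAnswerSet P1 M1)
    (hM2 : M2 = {s} ∨ isAnswerSet (P2 ∪ fixProg (progAtoms P1) M1) (M1 ∪ M2)) :
    ∃ N, isAnswerSet (P1 ∪ satProg s n P2) N ∧ M1 ∪ M2 = N \ {n} := by
  have hsplit (N : Set α) :=
    isAnswerSet_union_splitting_iff (N := N) (notMem_progAtoms_of_heads_satProg hheads hs hn)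
  set B := progAtoms P1
  have hsB : s ∉ B := fun h => hs (Or.inl h)
  have hnB : n ∉ B := fun h => hn (Or.inl h)
  have hM1B : M1 ⊆ B := hM1.subset_heads.trans (heads_subset_progAtoms P1)
  have hFB : progAtoms (fixProg B M1) ⊆ B := progAtoms_fixProg_subset hM1B
  rcases hM2 with rfl | hM
  · have hnN : n ∉ M1 ∪ {s} := fun h => h.elim (fun h => hnB (hM1B h)) (Ne.symm hsn)
    have hNB : (M1 ∪ {s}) ∩ B = M1 := by
      rw [Set.union_inter_distrib_right, Set.inter_eq_left.2 hM1B,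
        Set.singleton_inter_eq_empty.2 hsB, Set.union_empty]
    have hNs : (M1 ∪ {s}) \ {s} = M1 := by
      rw [Set.union_sdiff_right, Set.sdiff_singleton_eq_self fun h => hsB (hM1B h)]
    refine ⟨M1 ∪ {s}, (hsplit _).2 ⟨by rwa [hNB], ?_⟩, (Set.sdiff_singleton_eq_self hnN).symm⟩
    rw [hNB, isAnswerSet_satProg_union_iff_of_mem (fun h => hsB (hFB h)) (Or.inr rfl) hnN, hNs]
    exact (isAnswerSet_fixProg_iff hM1B).2 rfl
  · set M := M1 ∪ M2
    have hMB : M ∩ B = M1 := inter_eq_of_isAnswerSet_union_fixProg hM1B hM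
    have hMatoms : M ⊆ progAtoms P2 ∪ B := by
      refine hM.subset_heads.trans ((heads_subset_progAtoms _).trans ?_)
      rw [progAtoms_union]
      exact Set.union_subset_union_right _ hFB
    have hsM : s ∉ M := fun h => (hMatoms h).elim (fun h => hs (Or.inr h)) hsB
    have hnM : n ∉ M := fun h => (hMatoms h).elim (fun h => hn (Or.inr h)) hnB
    have hNB : insert n M ∩ B = M1 := by rw [Set.insert_inter_of_notMem hnB, hMB]
    refine ⟨insert n M, (hsplit _).2 ⟨by rwa [hNB], ?_⟩, (Set.insert_sdiff_self_of_notMem hnM).symm⟩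
    rw [hNB, isAnswerSet_satProg_union_iff_of_notMem (fun h => hn (Or.inr h))
      (fun h => hnB (hFB h)) (fun h => h.elim hsn hsM) (Set.mem_insert n M),
      Set.insert_sdiff_self_of_notMem hnM]
    exact hM

end UnionSat

end ASP

open ASP in
theorem union_sat_answer_sets_general {α : Type} (P1 P2 : AProgram α) (s n : α)
    (hheads : ∀ a ∈ heads P2, a ∉ progAtoms P1)
    (hs : s ∉ progAtoms P1 ∪ progAtoms P2) (hn : n ∉ progAtoms P1 ∪ progAtoms P2)
    (hsn : s ≠ n) (M : Set α) :
    (∃ N, isAnswerSet (P1 ∪ satProg s n P2) N ∧ M = N \ {n}) ↔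
      ∃ M1 M2, M = M1 ∪ M2 ∧ isAnswerSet P1 M1 ∧ M2 ⊆ heads (satProg s n P2) ∧
        (M2 = {s} ∨ isAnswerSet (P2 ∪ fixProg (progAtoms P1) M1) (M1 ∪ M2)) := by
  constructor
  · rintro ⟨N, hN, rfl⟩
    exact exists_decomposition_of_isAnswerSet_union_satProg hheads hs hn hN
  · rintro ⟨M1, M2, rfl, hM1, -, hM2⟩
    exact isAnswerSet_union_satProg_of_decomposition hheads hs hn hsn hM1 hM2

open ASP in
/-- answer sets of `P1 ∪ sat(P2)` (up to the hidden atom `n` = nsat)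
decompose as `M1 ∪ M2` with `M1` an answer set of `P1` and `M2 ⊆ heads(sat(P2))`
either `{s}` (= {sat}) or such that `M1 ∪ M2` is an answer set of
`P2 ∪ fix_{P1}(M1)`. -/
theorem union_sat_answer_sets {α : Type} (P1 P2 : AProgram α)
    (hfin1 : P1.Finite) (hfin2 : P2.Finite) (s n : α)
    (hheads : ∀ a ∈ heads P2, a ∉ progAtoms P1)
    (hs : s ∉ progAtoms P1 ∪ progAtoms P2) (hn : n ∉ progAtoms P1 ∪ progAtoms P2)
    (hsn : s ≠ n) (M : Set α) :
    (∃ N, isAnswerSet (P1 ∪ satProg s n P2) N ∧ M = N \ {n}) ↔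
      ∃ M1 M2, M = M1 ∪ M2 ∧ isAnswerSet P1 M1 ∧ M2 ⊆ heads (satProg s n P2) ∧
        (M2 = {s} ∨ isAnswerSet (P2 ∪ fixProg (progAtoms P1) M1) (M1 ∪ M2)) :=
  union_sat_answer_sets_general P1 P2 s n hheads hs hn hsn M
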